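/- arXiv:1201.0083 — 3 statements merged into one kernel-verified Lean document; each statement's English description precedes it below -/
import Mathlib

section
/- Let $(X_i)_{1\le i\le n}$ be integrable and adapted to $(\mathcal F_i)_{0\le i\le n}$, and let $W_i$ be the backward-recursive thresholds $W_n = -\infty$, $W_i = E[X_{i+1} \vee W_{i+1} \mid \mathcal F_i]$. Then for any stopping time $S$, the stopping time $T(S) := \min\{S < i \le n : X_i > W_i\}$ satisfies $E[X_{T(S)} \mid \mathcal F_S] = W_S \ge E[X_T \mid \mathcal F_S]$ almost surely for every stopping time $T$ with $T > S$ on $\{S < n\}$ and $T = S$ on $\{S = n\}$. -/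
open MeasureTheory Filter Set

/-!
Replace `W` by a measurable version `V` of the recursion and argue by backward induction on a
deterministic time `k < n`. Conditioning on `ℱ (k + 1)`, the payoff of a stopping time `T > k` is
`X (k + 1)` on `{T = k + 1}` and the payoff of a stopping time `> k + 1` elsewhere, so
`E[X_T | ℱ (k + 1)] ≤ max (X (k + 1)) (V (k + 1))`; the threshold time stops at `k + 1` exactly
where `X (k + 1) > V (k + 1)`, so for it this is an equality. The tower property then gives
`E[X_T | ℱ k] ≤ V k`, with equality for the threshold time. For a random start `S`, `E[· | ℱ_S]`
agrees with `E[· | ℱ k]` on `{S = k}`, which reduces the theorem to the deterministic case.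
-/

section CondExp
variable {Ω E : Type*} {m m0 : MeasurableSpace Ω} {μ : Measure Ω}
  [NormedAddCommGroup E] [NormedSpace ℝ E] [CompleteSpace E] {s : Set Ω} {f g : Ω → E}

theorem condExp_piecewise [∀ ω, Decidable (ω ∈ s)] (hm : m ≤ m0) (hs : MeasurableSet[m] s)
    (hf : Integrable f μ) (hg : Integrable g μ) :
    μ[s.piecewise f g | m] =ᵐ[μ] s.piecewise (μ[f | m]) (μ[g | m]) := by
  have h_ind : ∀ f' g' : Ω → E, s.piecewise f' g' = s.indicator f' + sᶜ.indicator g' := by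
    intro f' g'; funext ω; by_cases hω : ω ∈ s <;> simp [hω]
  rw [h_ind, h_ind]
  exact (condExp_add (hf.indicator (hm s hs)) (hg.indicator (hm s hs).compl) m).trans
    ((condExp_indicator hf hs).add (condExp_indicator hg hs.compl))

theorem condExp_ae_eq_restrict_of_ae_eq_restrict (hm : m ≤ m0) (hs : MeasurableSet[m] s)
    (hf : Integrable f μ) (hg : Integrable g μ) (hfg : f =ᵐ[μ.restrict s] g) :
    μ[f | m] =ᵐ[μ.restrict s] μ[g | m] := by
  rw [ae_eq_restrict_iff_indicator_ae_eq (hm s hs)] at hfg ⊢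
  exact (condExp_indicator hf hs).symm.trans
    ((condExp_congr_ae hfg).trans (condExp_indicator hg hs))

end CondExp

theorem eval_eq_piecewise_max {Ω β : Type*} {X : ℕ → Ω → β} {T : Ω → ℕ} {k : ℕ}
    (hkT : ∀ ω, k < T ω) :
    (fun ω => X (T ω) ω)
      = {ω | T ω = k + 1}.piecewise (X (k + 1)) (fun ω => X (max (T ω) (k + 2)) ω) := by
  ext ω
  by_cases hω : T ω = k + 1
  · simp [hω]
  · simp [hω, max_eq_left (show k + 2 ≤ T ω by have := hkT ω; omega)]

section StoppingTime
variable {Ω E : Type*} {m0 : MeasurableSpace Ω} {μ : Measure Ω} {ℱ : Filtration ℕ m0} {n : ℕ}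
  [NormedAddCommGroup E]

theorem integrable_stoppedValue_nat {X : ℕ → Ω → E} (hX : ∀ i, Integrable (X i) μ) {T : Ω → ℕ}
    (hT : IsStoppingTime ℱ (fun ω => (T ω : WithTop ℕ))) (hTn : ∀ ω, T ω ≤ n) :
    Integrable (fun ω => X (T ω) ω) μ :=
  integrable_stoppedValue ℕ hT hX fun ω => WithTop.coe_le_coe.2 (hTn ω)

theorem measurableSet_eq_of_isStoppingTime {T : Ω → ℕ}
    (hT : IsStoppingTime ℱ (fun ω => (T ω : WithTop ℕ))) (i : ℕ) :
    MeasurableSet[ℱ i] {ω | T ω = i} := by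
  convert hT.measurableSet_eq_of_countable i using 3 with ω
  simp

variable [NormedSpace ℝ E] [CompleteSpace E]

theorem condExp_stoppedValue_ae_eq_restrict {X : ℕ → Ω → E} (hX : ∀ i, Integrable (X i) μ)
    {k : ℕ} {s : Set Ω} (hs : MeasurableSet[ℱ k] s) {R R' : Ω → ℕ}
    (hR : IsStoppingTime ℱ (fun ω => (R ω : WithTop ℕ)))
    (hR' : IsStoppingTime ℱ (fun ω => (R' ω : WithTop ℕ)))
    (hRn : ∀ ω, R ω ≤ n) (hR'n : ∀ ω, R' ω ≤ n) (hRR' : ∀ ω ∈ s, R ω = R' ω) :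
    μ[fun ω => X (R ω) ω | ℱ k] =ᵐ[μ.restrict s] μ[fun ω => X (R' ω) ω | ℱ k] := by
  refine condExp_ae_eq_restrict_of_ae_eq_restrict (ℱ.le k) hs
    (integrable_stoppedValue_nat hX hR hRn) (integrable_stoppedValue_nat hX hR' hR'n) ?_
  filter_upwards [ae_restrict_mem (ℱ.le k s hs)] with ω hω
  rw [hRR' ω hω]

theorem condExp_stoppedValue_ae_eq_restrict_of_eq {X : ℕ → Ω → E} {i : ℕ}
    [SigmaFinite (μ.trim (ℱ.le i))] (hX : ∀ i, Integrable (X i) μ)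
    (hXi : StronglyMeasurable[ℱ i] (X i)) (hin : i ≤ n)
    {s : Set Ω} (hs : MeasurableSet[ℱ i] s) {R : Ω → ℕ}
    (hR : IsStoppingTime ℱ (fun ω => (R ω : WithTop ℕ))) (hRn : ∀ ω, R ω ≤ n)
    (hRs : ∀ ω ∈ s, R ω = i) :
    μ[fun ω => X (R ω) ω | ℱ i] =ᵐ[μ.restrict s] X i :=
  (condExp_stoppedValue_ae_eq_restrict hX hs hR (isStoppingTime_const ℱ i) hRn (fun _ => hin)
    hRs).trans (EventuallyEq.of_eq (condExp_of_stronglyMeasurable (ℱ.le i) hXi (hX i)))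

theorem ae_condExp_stoppingTime_of_forall_restrict [IsFiniteMeasure μ] {S : Ω → ℕ}
    (hS : IsStoppingTime ℱ (fun ω => (S ω : WithTop ℕ))) (hSn : ∀ ω, S ω ≤ n) {f : Ω → E}
    {p : Ω → E → Prop} (h : ∀ k ≤ n, ∀ᵐ ω ∂μ.restrict {ω | S ω = k}, p ω (μ[f | ℱ k] ω)) :
    ∀ᵐ ω ∂μ, p ω (μ[f | hS.measurableSpace] ω) := by
  have hcover : (⋃ k ∈ Iic n, {ω | S ω = k}) = univ :=
    eq_univ_of_forall fun ω => mem_biUnion (hSn ω) rfl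
  suffices h' : ∀ᵐ ω ∂μ.restrict (⋃ k ∈ Iic n, {ω | S ω = k}),
      p ω (μ[f | hS.measurableSpace] ω) by
    rwa [hcover, Measure.restrict_univ] at h'
  refine (ae_restrict_biUnion_iff _ (to_countable _) _).2 fun k hk => ?_
  have hS_eq : μ[f | hS.measurableSpace] =ᵐ[μ.restrict {ω | S ω = k}] μ[f | ℱ k] := by
    simpa using condExp_stopping_time_ae_eq_restrict_eq_of_countable (f := f) hS k
  filter_upwards [hS_eq, h k hk] with ω h₁ h₂
  rwa [h₁]

end StoppingTime

section HittingTime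
variable {Ω β : Type*} {u : ℕ → Ω → β} {s : Set β} {ω : Ω}

theorem hittingBtwn_self (n : ℕ) : hittingBtwn u s n n ω = n :=
  le_antisymm (hittingBtwn_le ω) (le_hittingBtwn le_rfl ω)

theorem hittingBtwn_eq_self_of_mem {k m : ℕ} (hkm : k ≤ m) (hk : u k ω ∈ s) :
    hittingBtwn u s k m ω = k :=
  le_antisymm (hittingBtwn_le_of_mem le_rfl hkm hk) (le_hittingBtwn hkm ω)

theorem hittingBtwn_succ_of_notMem {k m : ℕ} (hkm : k ≤ m) (hk : u k ω ∉ s) :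
    hittingBtwn u s (k + 1) m ω = hittingBtwn u s k m ω := by
  refine le_antisymm ?_ (hittingBtwn_apply_mono_left u s m ω k.le_succ)
  rcases (hittingBtwn_le (u := u) (s := s) (n := k) ω).lt_or_eq with hlt | heq
  · have hmem := hittingBtwn_mem_set_of_hittingBtwn_lt hlt
    have hne : k ≠ hittingBtwn u s k m ω := fun h => hk (h ▸ hmem)
    exact hittingBtwn_le_of_mem ((le_hittingBtwn hkm ω).lt_of_ne hne) hlt.le hmem
  · rw [heq]
    exact hittingBtwn_le ω

theorem ite_sInf_eq_hittingBtwn {k n : ℕ} (hk : k ≤ n) {P : ℕ → Prop}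
    (hP : ∀ i < n, P i ↔ u i ω ∈ s) :
    (if k = n then n else sInf {i | k < i ∧ i ≤ n ∧ (i = n ∨ P i)})
      = hittingBtwn u s (min (k + 1) n) n ω := by
  split_ifs with hkn
  · rw [hkn, min_eq_right n.le_succ, hittingBtwn_self]
  rw [min_eq_left (by omega)]
  refine IsLeast.csInf_eq ⟨⟨le_hittingBtwn (u := u) (s := s) (by omega : k + 1 ≤ n) ω,
    hittingBtwn_le ω, ?_⟩, ?_⟩
  · rcases (hittingBtwn_le (u := u) (s := s) (n := k + 1) ω).lt_or_eq with hlt | heq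
    · exact Or.inr ((hP _ hlt).2 (hittingBtwn_mem_set_of_hittingBtwn_lt hlt))
    · exact Or.inl heq
  · rintro i ⟨hki, hin, hi⟩
    rcases hin.lt_or_eq with hlt | rfl
    · exact hittingBtwn_le_of_mem hki hin ((hP i hlt).1 (hi.resolve_left hlt.ne))
    · exact hittingBtwn_le ω

end HittingTime

section Thresholds
variable {Ω : Type*} {m0 : MeasurableSpace Ω} (μ : Measure Ω) (ℱ : Filtration ℕ m0)
  (X : ℕ → Ω → ℝ) (n : ℕ)

/-- A measurable version of the thresholds `W i`, which the hypotheses pin down only up to null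
sets. The paper's `W n = -∞` turns the recursion at `i = n - 1` into `E[X n | ℱ (n - 1)]`. -/
noncomputable def continuationValue (i : ℕ) : Ω → ℝ :=
  if i + 1 < n then μ[fun ω => max (X (i + 1) ω) (continuationValue (i + 1) ω) | ℱ i]
  else μ[X n | ℱ i]
termination_by n - i

noncomputable def thresholdTime (k : ℕ) : Ω → ℕ :=
  hittingBtwn (fun i ω => X i ω - continuationValue μ ℱ X n i ω) (Ioi 0) k n

variable {μ ℱ X n}

theorem continuationValue_of_succ_lt {i : ℕ} (hi : i + 1 < n) :
    continuationValue μ ℱ X n i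
      = μ[fun ω => max (X (i + 1) ω) (continuationValue μ ℱ X n (i + 1) ω) | ℱ i] := by
  rw [continuationValue, if_pos hi]

theorem continuationValue_of_le {i : ℕ} (hi : n ≤ i + 1) :
    continuationValue μ ℱ X n i = μ[X n | ℱ i] := by
  rw [continuationValue, if_neg (by omega)]

theorem stronglyMeasurable_continuationValue (i : ℕ) :
    StronglyMeasurable[ℱ i] (continuationValue μ ℱ X n i) := by
  rw [continuationValue]
  split_ifs <;> exact stronglyMeasurable_condExp

theorem integrable_continuationValue (i : ℕ) : Integrable (continuationValue μ ℱ X n i) μ := by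
  rw [continuationValue]
  split_ifs <;> exact integrable_condExp

theorem ae_eq_continuationValue {W : ℕ → Ω → ℝ} (hWn : W (n - 1) =ᵐ[μ] μ[X n | ℱ (n - 1)])
    (hWrec : ∀ i, i + 1 < n →
      W i =ᵐ[μ] μ[fun ω => max (X (i + 1) ω) (W (i + 1) ω) | ℱ i]) :
    ∀ᵐ ω ∂μ, ∀ i < n, W i ω = continuationValue μ ℱ X n i ω := by
  have h : ∀ i ≤ n - 1, W i =ᵐ[μ] continuationValue μ ℱ X n i := by
    intro i hi
    induction hi using Nat.decreasingInduction with
    | self =>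
      rw [continuationValue_of_le (by omega)]
      exact hWn
    | of_succ k hk ih =>
      rw [continuationValue_of_succ_lt (by omega)]
      refine (hWrec k (by omega)).trans (condExp_congr_ae ?_)
      filter_upwards [ih] with ω hω
      rw [hω]
  exact (ae_ball_iff (to_countable (Iio n))).2 fun i hi => h i (by simp at hi; omega)

theorem isStoppingTime_thresholdTime (hXadapt : ∀ i, StronglyMeasurable[ℱ i] (X i)) {τ : Ω → ℕ}
    (hτ : IsStoppingTime ℱ (fun ω => (τ ω : WithTop ℕ))) (hτn : ∀ ω, τ ω ≤ n) :
    IsStoppingTime ℱ (fun ω => (thresholdTime μ ℱ X n (τ ω) ω : WithTop ℕ)) := by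
  have hadapted : Adapted ℱ (fun i ω => X i ω - continuationValue μ ℱ X n i ω) := fun i =>
    (hXadapt i).measurable.sub (stronglyMeasurable_continuationValue i).measurable
  exact hadapted.isStoppingTime_hittingBtwn_isStoppingTime hτ
    (fun ω => WithTop.coe_le_coe.2 (hτn ω)) measurableSet_Ioi

theorem thresholdTime_le (k : ℕ) (ω : Ω) : thresholdTime μ ℱ X n k ω ≤ n :=
  hittingBtwn_le ω

theorem thresholdTime_self (ω : Ω) : thresholdTime μ ℱ X n n ω = n :=
  hittingBtwn_self n

theorem thresholdTime_of_lt {k : ℕ} (hk : k ≤ n) {ω : Ω}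
    (h : continuationValue μ ℱ X n k ω < X k ω) : thresholdTime μ ℱ X n k ω = k :=
  hittingBtwn_eq_self_of_mem hk (sub_pos.2 h)

theorem thresholdTime_succ_of_le {k : ℕ} (hk : k ≤ n) {ω : Ω}
    (h : X k ω ≤ continuationValue μ ℱ X n k ω) :
    thresholdTime μ ℱ X n (k + 1) ω = thresholdTime μ ℱ X n k ω :=
  hittingBtwn_succ_of_notMem hk (by simpa using h)

theorem ite_sInf_eq_thresholdTime {W : ℕ → Ω → ℝ} {ω : Ω} {k : ℕ} (hk : k ≤ n)
    (hW : ∀ i < n, W i ω = continuationValue μ ℱ X n i ω) :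
    (if k = n then n else sInf {i | k < i ∧ i ≤ n ∧ (i = n ∨ W i ω < X i ω)})
      = thresholdTime μ ℱ X n (min (k + 1) n) ω :=
  ite_sInf_eq_hittingBtwn hk fun i hi => by simp [hW i hi]

end Thresholds

section OptimalStopping
variable {Ω : Type*} {m0 : MeasurableSpace Ω} {μ : Measure Ω} [IsFiniteMeasure μ]
  {ℱ : Filtration ℕ m0} {X : ℕ → Ω → ℝ} {n : ℕ}
  (hXint : ∀ i, Integrable (X i) μ) (hXadapt : ∀ i, StronglyMeasurable[ℱ i] (X i))
include hXint hXadapt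

theorem condExp_thresholdTime {k : ℕ} (hk : k < n) :
    μ[fun ω => X (thresholdTime μ ℱ X n (k + 1) ω) ω | ℱ k] =ᵐ[μ] continuationValue μ ℱ X n k := by
  induction Nat.le_sub_one_of_lt hk using Nat.decreasingInduction with
  | self =>
    have hlast : (fun ω => X (thresholdTime μ ℱ X n (n - 1 + 1) ω) ω) = X n := by
      ext ω
      rw [Nat.sub_add_cancel (by omega), thresholdTime_self]
    rw [hlast, continuationValue_of_le (by omega)]
  | of_succ k hk₁ ih =>
    set V := continuationValue μ ℱ X n
    set A := {ω | V (k + 1) ω < X (k + 1) ω}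
    have hA : MeasurableSet[ℱ (k + 1)] A := measurableSet_lt
      (stronglyMeasurable_continuationValue (k + 1)).measurable (hXadapt (k + 1)).measurable
    have hsplit : (fun ω => X (thresholdTime μ ℱ X n (k + 1) ω) ω)
        = A.piecewise (X (k + 1)) (fun ω => X (thresholdTime μ ℱ X n (k + 1 + 1) ω) ω) := by
      ext ω
      by_cases hω : ω ∈ A
      · simp [hω, thresholdTime_of_lt (by omega) hω]
      · simp [hω, thresholdTime_succ_of_le (by omega) (not_lt.1 hω)]
    have hnext : μ[fun ω => X (thresholdTime μ ℱ X n (k + 1) ω) ω | ℱ (k + 1)]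
        =ᵐ[μ] fun ω => max (X (k + 1) ω) (V (k + 1) ω) := by
      have hτ : IsStoppingTime ℱ (fun ω => (thresholdTime μ ℱ X n (k + 1 + 1) ω : WithTop ℕ)) :=
        isStoppingTime_thresholdTime hXadapt (isStoppingTime_const ℱ _)
          fun _ => Nat.add_lt_of_lt_sub hk₁
      rw [hsplit]
      filter_upwards [condExp_piecewise (ℱ.le _) hA (hXint _)
          (integrable_stoppedValue_nat hXint hτ (thresholdTime_le _)),
        ih (by omega)] with ω h₁ h₂
      rw [h₁, condExp_of_stronglyMeasurable (ℱ.le _) (hXadapt _) (hXint _)]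
      by_cases hω : ω ∈ A
      · simp [hω, (show V (k + 1) ω < X (k + 1) ω from hω).le]
      · simp [hω, h₂, not_lt.1 (show ¬V (k + 1) ω < X (k + 1) ω from hω)]
    calc μ[fun ω => X (thresholdTime μ ℱ X n (k + 1) ω) ω | ℱ k]
        =ᵐ[μ] μ[μ[fun ω => X (thresholdTime μ ℱ X n (k + 1) ω) ω | ℱ (k + 1)] | ℱ k] :=
          (condExp_condExp_of_le (ℱ.mono k.le_succ) (ℱ.le _)).symm
      _ =ᵐ[μ] μ[fun ω => max (X (k + 1) ω) (V (k + 1) ω) | ℱ k] := condExp_congr_ae hnext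
      _ = V k := (continuationValue_of_succ_lt (by omega)).symm

theorem condExp_stoppedValue_le_continuationValue {k : ℕ} (hk : k < n) {T : Ω → ℕ}
    (hT : IsStoppingTime ℱ (fun ω => (T ω : WithTop ℕ))) (hkT : ∀ ω, k < T ω)
    (hTn : ∀ ω, T ω ≤ n) :
    μ[fun ω => X (T ω) ω | ℱ k] ≤ᵐ[μ] continuationValue μ ℱ X n k := by
  induction Nat.le_sub_one_of_lt hk using Nat.decreasingInduction generalizing T with
  | self =>
    have hlast : (fun ω => X (T ω) ω) = X n := by
      ext ω
      rw [show T ω = n by have := hkT ω; have := hTn ω; omega]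
    rw [hlast, continuationValue_of_le (by omega)]
  | of_succ k hk₁ ih =>
    set V := continuationValue μ ℱ X n
    have hT' : IsStoppingTime ℱ (fun ω => ((max (T ω) (k + 2) : ℕ) : WithTop ℕ)) := by
      exact_mod_cast hT.max_const (k + 2)
    have hT'n : ∀ ω, max (T ω) (k + 2) ≤ n := fun ω => max_le (hTn ω) (by omega)
    have hnext : μ[fun ω => X (T ω) ω | ℱ (k + 1)]
        ≤ᵐ[μ] fun ω => max (X (k + 1) ω) (V (k + 1) ω) := by
      rw [eval_eq_piecewise_max hkT]
      filter_upwards [condExp_piecewise (ℱ.le _) (measurableSet_eq_of_isStoppingTime hT (k + 1))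
          (hXint _) (integrable_stoppedValue_nat hXint hT' hT'n),
        ih (by omega) hT' (fun ω => by simp) hT'n] with ω h₁ h₂
      rw [h₁, condExp_of_stronglyMeasurable (ℱ.le _) (hXadapt _) (hXint _)]
      by_cases hω : T ω = k + 1
      · simp [hω]
      · simpa [hω] using Or.inr h₂
    calc μ[fun ω => X (T ω) ω | ℱ k]
        =ᵐ[μ] μ[μ[fun ω => X (T ω) ω | ℱ (k + 1)] | ℱ k] :=
          (condExp_condExp_of_le (ℱ.mono k.le_succ) (ℱ.le _)).symm
      _ ≤ᵐ[μ] μ[fun ω => max (X (k + 1) ω) (V (k + 1) ω) | ℱ k] :=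
          condExp_mono integrable_condExp
            ((hXint _).sup (integrable_continuationValue _)) hnext
      _ = V k := (continuationValue_of_succ_lt (by omega)).symm

variable {S : Ω → ℕ} (hS : IsStoppingTime ℱ (fun ω => (S ω : WithTop ℕ))) (hSn : ∀ ω, S ω ≤ n)
include hS hSn

theorem condExp_thresholdTime_stoppingTime :
    μ[fun ω => X (thresholdTime μ ℱ X n (min (S ω + 1) n) ω) ω | hS.measurableSpace]
      =ᵐ[μ] fun ω => if S ω = n then X n ω else continuationValue μ ℱ X n (S ω) ω := by
  have hσ : IsStoppingTime ℱ
      (fun ω => (thresholdTime μ ℱ X n (min (S ω + 1) n) ω : WithTop ℕ)) :=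
    isStoppingTime_thresholdTime hXadapt (by exact_mod_cast (hS.add_const' 1).min_const n)
      fun ω => min_le_right _ _
  refine ae_condExp_stoppingTime_of_forall_restrict hS hSn
    (p := fun ω y => y = if S ω = n then X n ω else continuationValue μ ℱ X n (S ω) ω)
    fun k hk => ?_
  have hSk := measurableSet_eq_of_isStoppingTime hS k
  rcases hk.lt_or_eq with hk | rfl
  · filter_upwards [condExp_stoppedValue_ae_eq_restrict hXint hSk hσ
        (isStoppingTime_thresholdTime (μ := μ) hXadapt (isStoppingTime_const ℱ (k + 1))
          fun _ => hk) (fun ω => thresholdTime_le _ ω) (thresholdTime_le _)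
        (fun ω (hω : S ω = k) => by simp [hω, Nat.succ_le_of_lt hk]),
      ae_restrict_of_ae (condExp_thresholdTime hXint hXadapt hk),
      ae_restrict_mem (ℱ.le k _ hSk)] with ω h₁ h₂ (hω : S ω = k)
    rw [h₁, h₂, hω, if_neg hk.ne]
  · filter_upwards [condExp_stoppedValue_ae_eq_restrict_of_eq hXint (hXadapt k) le_rfl hSk hσ
        (fun ω => thresholdTime_le _ ω) (fun ω (hω : S ω = k) => by simp [hω, thresholdTime_self]),
      ae_restrict_mem (ℱ.le k _ hSk)] with ω h (hω : S ω = k)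
    rw [h, if_pos hω]

theorem condExp_stoppedValue_le_stoppingTime {T : Ω → ℕ}
    (hT : IsStoppingTime ℱ (fun ω => (T ω : WithTop ℕ)))
    (hST : ∀ ω, (S ω < n → S ω < T ω) ∧ (S ω = n → T ω = S ω) ∧ T ω ≤ n) :
    μ[fun ω => X (T ω) ω | hS.measurableSpace]
      ≤ᵐ[μ] fun ω => if S ω = n then X n ω else continuationValue μ ℱ X n (S ω) ω := by
  refine ae_condExp_stoppingTime_of_forall_restrict hS hSn
    (p := fun ω y => y ≤ if S ω = n then X n ω else continuationValue μ ℱ X n (S ω) ω)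
    fun k hk => ?_
  have hSk := measurableSet_eq_of_isStoppingTime hS k
  have hTn : ∀ ω, T ω ≤ n := fun ω => (hST ω).2.2
  rcases hk.lt_or_eq with hk | rfl
  · have hT' : IsStoppingTime ℱ (fun ω => ((max (T ω) (k + 1) : ℕ) : WithTop ℕ)) := by
      exact_mod_cast hT.max_const (k + 1)
    have hT'n : ∀ ω, max (T ω) (k + 1) ≤ n := fun ω => max_le (hTn ω) hk
    filter_upwards [condExp_stoppedValue_ae_eq_restrict hXint hSk hT hT' hTn hT'n
        fun ω (hω : S ω = k) => (max_eq_left (hω ▸ (hST ω).1 (hω ▸ hk))).symm,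
      ae_restrict_of_ae (condExp_stoppedValue_le_continuationValue hXint hXadapt hk hT'
        (fun ω => lt_max_of_lt_right k.lt_succ_self) hT'n),
      ae_restrict_mem (ℱ.le k _ hSk)] with ω h₁ h₂ (hω : S ω = k)
    rw [h₁, hω, if_neg hk.ne]
    exact h₂
  · filter_upwards [condExp_stoppedValue_ae_eq_restrict_of_eq hXint (hXadapt k) le_rfl hSk hT hTn
        (fun ω (hω : S ω = k) => by rw [(hST ω).2.1 hω, hω]),
      ae_restrict_mem (ℱ.le k _ hSk)] with ω h (hω : S ω = k)
    rw [h, if_pos hω]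

end OptimalStopping

theorem stmt1_general {Ω : Type*} {m0 : MeasurableSpace Ω} (μ : Measure Ω) [IsProbabilityMeasure μ]
    (n : ℕ) (ℱ : Filtration ℕ m0)
    (X : ℕ → Ω → ℝ) (hXint : ∀ i, Integrable (X i) μ)
    (hXadapt : ∀ i, StronglyMeasurable[ℱ i] (X i))
    (W : ℕ → Ω → ℝ)
    (hWn : W (n - 1) =ᵐ[μ] μ[X n | ℱ (n - 1)])
    (hWrec : ∀ i, i + 1 < n →
      W i =ᵐ[μ] μ[fun ω => max (X (i + 1) ω) (W (i + 1) ω) | ℱ i])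
    (S : Ω → ℕ) (hS : IsStoppingTime ℱ (fun ω => (S ω : WithTop ℕ))) (hSn : ∀ ω, S ω ≤ n)
    (TS : Ω → ℕ)
    (hTS : ∀ ω, TS ω = if S ω = n then n
      else sInf {i | S ω < i ∧ i ≤ n ∧ (i = n ∨ W i ω < X i ω)}) :
    μ[fun ω => X (TS ω) ω | hS.measurableSpace]
      =ᵐ[μ] (fun ω => if S ω = n then X n ω else W (S ω) ω) ∧
    ∀ T : Ω → ℕ, IsStoppingTime ℱ (fun ω => (T ω : WithTop ℕ)) →
      (∀ ω, (S ω < n → S ω < T ω) ∧ (S ω = n → T ω = S ω) ∧ T ω ≤ n) →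
      μ[fun ω => X (T ω) ω | hS.measurableSpace]
        ≤ᵐ[μ] fun ω => if S ω = n then X n ω else W (S ω) ω := by
  have hWV := ae_eq_continuationValue hWn hWrec
  have hvalue : (fun ω => if S ω = n then X n ω else W (S ω) ω)
      =ᵐ[μ] fun ω => if S ω = n then X n ω else continuationValue μ ℱ X n (S ω) ω := by
    filter_upwards [hWV] with ω hω
    split_ifs with h
    · rfl
    · exact hω _ ((hSn ω).lt_of_ne h)
  have hTS_ae : (fun ω => X (TS ω) ω)
      =ᵐ[μ] fun ω => X (thresholdTime μ ℱ X n (min (S ω + 1) n) ω) ω := by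
    filter_upwards [hWV] with ω hω
    rw [hTS, ite_sInf_eq_thresholdTime (hSn ω) hω]
  refine ⟨?_, fun T hT hST => ?_⟩
  · exact (condExp_congr_ae hTS_ae).trans
      ((condExp_thresholdTime_stoppingTime hXint hXadapt hS hSn).trans hvalue.symm)
  · exact (condExp_stoppedValue_le_stoppingTime hXint hXadapt hS hSn hT hST).trans
      hvalue.symm.le

/-- Recursive solution of the one-stopping problem with random starting time
(Proposition 2.1(b)): for a stopping time `S ≤ n`, the threshold stopping time
`T(S) = min{S < i ≤ n : X_i > W_i}` (with `W_n = -∞`, encoded by allowing `i = n`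
unconditionally, and `T(S) = n`, `W_S := X_n` on `{S = n}`) attains `W_S` and
dominates every stopping time `T` with `T > S` on `{S < n}` and `T = S` on `{S = n}`. -/
theorem stmt1 {Ω : Type*} {m0 : MeasurableSpace Ω} (μ : Measure Ω) [IsProbabilityMeasure μ]
    (n : ℕ) (hn : 1 ≤ n) (ℱ : Filtration ℕ m0)
    (X : ℕ → Ω → ℝ) (hXint : ∀ i, Integrable (X i) μ)
    (hXadapt : ∀ i, StronglyMeasurable[ℱ i] (X i))
    (W : ℕ → Ω → ℝ)
    (hWn : W (n - 1) =ᵐ[μ] μ[X n | ℱ (n - 1)])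
    (hWrec : ∀ i, i + 1 < n →
      W i =ᵐ[μ] μ[fun ω => max (X (i + 1) ω) (W (i + 1) ω) | ℱ i])
    (S : Ω → ℕ) (hS : IsStoppingTime ℱ (fun ω => (S ω : WithTop ℕ))) (hSn : ∀ ω, S ω ≤ n)
    (TS : Ω → ℕ)
    (hTS : ∀ ω, TS ω = if S ω = n then n
      else sInf {i | S ω < i ∧ i ≤ n ∧ (i = n ∨ W i ω < X i ω)}) :
    μ[fun ω => X (TS ω) ω | hS.measurableSpace]
      =ᵐ[μ] (fun ω => if S ω = n then X n ω else W (S ω) ω) ∧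
    ∀ T : Ω → ℕ, IsStoppingTime ℱ (fun ω => (T ω : WithTop ℕ)) →
      (∀ ω, (S ω < n → S ω < T ω) ∧ (S ω = n → T ω = S ω) ∧ T ω ≤ n) →
      μ[fun ω => X (T ω) ω | hS.measurableSpace]
        ≤ᵐ[μ] fun ω => if S ω = n then X n ω else W (S ω) ω :=
  stmt1_general μ n ℱ X hXint hXadapt W hWn hWrec S hS hSn TS hTS
end

section
/- In Case 3, the function $u^m(t,x) := \phi^m(x - v(t)) + v(t)$, with $\phi^m$ the inverse of $\Phi^m$, satisfies $\partial_t u^m(t,x) = -\int_{u^m(t,x)}^\infty G(t, \xi^{m-1}(t,y))\,dy$ on $[0,1)$ with $u^m(1,x) = x$, where $G(t,y) = H(y-v(t))|v'(t)|$ and $\xi^{m-1}(t,\cdot)$ is the inverse of $u^{m-1}(t,\cdot)$ ($u^0(t,x) := x$). In particular $u^m(t,-\infty) = r_m + v(t)$. -/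
/-!
Write `Φʲ = id - eʲ` with `eʲ` the tail integral of `1/Rʲ - 1`. By induction on `j`, each `Φʲ` is
continuous and strictly increasing on `(rⱼ, ∞)`, with `y - Φʲ(y)` nonincreasing and tending to
`0`. For `Φ^{j-1}` these properties make `H ∘ Φ^{j-1}` antitone and dominated by a translate of
`H`; hence `Rʲ > 0` on `(rⱼ, ∞)`, and `1/Rʲ - 1 ≈ 1 - Rʲ` is integrable at `∞` because the tail
integral of `H` is, which gives the same properties for `Φʲ`.

The inverse `φᵐ` then has derivative `Rᵐ ∘ φᵐ`, so `∂ₜuᵐ = v' (1 - Rᵐ(φᵐ(x - v)))`. As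
`ξ(t, y) = Φ^{m-1}(y - v) + v`, translating by `v` turns `∫_{uᵐ}^∞ G(t, ξ(t, y)) dy` into
`|v'| ∫_{φᵐ(x - v)}^∞ H ∘ Φ^{m-1} = |v'| (1 - Rᵐ(φᵐ(x - v)))`, and `|v'| = -v'`. The boundary
values follow from `φᵐ(z) - z → 0` as `z → ∞` and `φᵐ(z) → rₘ` as `z → -∞`.
-/

open MeasureTheory Set Filter Topology

lemma setIntegral_Ioi_comp_sub (h : ℝ → ℝ) (A c : ℝ) :
    ∫ y in Ioi A, h (y - c) = ∫ y in Ioi (A - c), h y := by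
  have := (measurePreserving_sub_right volume c).setIntegral_preimage_emb
    (MeasurableEquiv.subRight c).measurableEmbedding h (Ioi (A - c))
  simpa using this

lemma integrableOn_Ioi_comp_sub {h : ℝ → ℝ} {A c : ℝ} (hh : IntegrableOn h (Ioi (A - c))) :
    IntegrableOn (fun y => h (y - c)) (Ioi A) := by
  have := (measurePreserving_sub_right volume c).integrableOn_comp_preimage
    (MeasurableEquiv.subRight c).measurableEmbedding |>.2 hh
  simpa [Function.comp_def] using this

lemma hasDerivAt_setIntegral_Ioi {f : ℝ → ℝ} {a x : ℝ}
    (hf : ∀ x, a < x → IntegrableOn f (Ioi x)) (hfc : ContinuousOn f (Ioi a)) (hx : a < x) :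
    HasDerivAt (fun s => ∫ y in Ioi s, f y) (-f x) x := by
  obtain ⟨a', ha', ha'x⟩ := exists_between hx
  have hFTC : HasDerivAt (fun s => ∫ y in a'..s, f y) (f x) x :=
    intervalIntegral.integral_hasDerivAt_right
      ((intervalIntegrable_iff_integrableOn_Ioc_of_le ha'x.le).2
        ((hf a' ha').mono_set Ioc_subset_Ioi_self))
      (AEStronglyMeasurable.stronglyMeasurableAtFilter_of_mem (hf a' ha').aestronglyMeasurable
        (Ioi_mem_nhds ha'x))
      (hfc.continuousAt (Ioi_mem_nhds hx))
  refine (hFTC.const_sub (∫ y in Ioi a', f y)).congr_of_eventuallyEq ?_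
  filter_upwards [Ioi_mem_nhds ha'x] with s hs
  rw [← intervalIntegral.integral_Ioi_sub_Ioi (hf a' ha') hs.le, sub_sub_cancel]

lemma setIntegral_Ioi_le_of_le {f : ℝ → ℝ} {x y : ℝ} (hf : IntegrableOn f (Ioi x))
    (hf0 : ∀ z, x < z → 0 ≤ f z) (hxy : x ≤ y) : ∫ z in Ioi y, f z ≤ ∫ z in Ioi x, f z :=
  setIntegral_mono_set hf (ae_restrict_of_forall_mem measurableSet_Ioi hf0)
    (Ioi_subset_Ioi hxy).eventuallyLE

lemma setIntegral_Ioi_lt_of_antitoneOn {f : ℝ → ℝ} {b x : ℝ} (hf : AntitoneOn f (Ioi b))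
    (hf0 : ∀ z, b < z → 0 ≤ f z) (hfi : IntegrableOn f (Ioi b)) (hpos : 0 < ∫ z in Ioi b, f z)
    (hbx : b < x) : ∫ z in Ioi x, f z < ∫ z in Ioi b, f z := by
  rcases (hf0 x hbx).eq_or_lt with hfx | hfx
  · have : ∫ z in Ioi x, f z = 0 := by
      refine setIntegral_eq_zero_of_forall_eq_zero fun z hz => ?_
      exact le_antisymm (hfx ▸ hf hbx (hbx.trans hz) (le_of_lt hz)) (hf0 z (hbx.trans hz))
    rwa [this]
  · rw [← sub_pos, intervalIntegral.integral_Ioi_sub_Ioi hfi hbx.le]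
    refine intervalIntegral.intervalIntegral_pos_of_pos_on
      ((intervalIntegrable_iff_integrableOn_Ioc_of_le hbx.le).2
        (hfi.mono_set Ioc_subset_Ioi_self))
      (fun z hz => hfx.trans_le (hf hz.1 hbx hz.2.le)) hbx

lemma integrableOn_Ioi_of_continuousOn_of_eventually_le {g k : ℝ → ℝ} {x : ℝ}
    (hg : ContinuousOn g (Ici x)) (hk : ∀ z, IntegrableOn k (Ioi z))
    (hle : ∀ᶠ y in atTop, ‖g y‖ ≤ k y) : IntegrableOn g (Ioi x) := by
  obtain ⟨x₁, hx₁⟩ := eventually_atTop.1 (hle.and (eventually_ge_atTop x))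
  have hxx₁ : x ≤ x₁ := (hx₁ x₁ le_rfl).2
  rw [← Ioc_union_Ioi_eq_Ioi hxx₁]
  refine IntegrableOn.union ?_ ?_
  · exact ((hg.mono Icc_subset_Ici_self).integrableOn_Icc).mono_set Ioc_subset_Icc_self
  · refine (hk x₁).mono'
      ((hg.mono (Ioi_subset_Ici hxx₁)).aestronglyMeasurable measurableSet_Ioi) ?_
    exact ae_restrict_of_forall_mem measurableSet_Ioi fun y hy => (hx₁ y (le_of_lt hy)).1

structure AdmissibleIntensity (H : ℝ → ℝ) : Prop where
  antitone : Antitone H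
  continuous : Continuous H
  nonneg : ∀ x, 0 ≤ H x
  integrableOn_Ioi : ∀ x, IntegrableOn H (Ioi x)
  integrableOn_Ioi_tail : ∀ z, IntegrableOn (fun y => ∫ x in Ioi y, H x) (Ioi z)

structure LevelOn (Φ : ℝ → ℝ) (b : ℝ) : Prop where
  strictMonoOn : StrictMonoOn Φ (Ioi b)
  antitoneOn_sub : AntitoneOn (fun y => y - Φ y) (Ioi b)
  continuousOn : ContinuousOn Φ (Ioi b)

lemma levelOn_id (b : ℝ) : LevelOn id b :=
  ⟨strictMono_id.strictMonoOn _, fun _ _ _ _ _ => by simp, continuousOn_id⟩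

lemma LevelOn.congr {Φ Ψ : ℝ → ℝ} {b : ℝ} (h : LevelOn Φ b) (hΨ : EqOn Ψ Φ (Ioi b)) :
    LevelOn Ψ b where
  strictMonoOn := h.strictMonoOn.congr hΨ.symm
  antitoneOn_sub := fun x hx y hy hxy => by
    simpa only [hΨ hx, hΨ hy] using h.antitoneOn_sub hx hy hxy
  continuousOn := h.continuousOn.congr hΨ

section Level

variable {H Ψ : ℝ → ℝ} {a : ℝ}

lemma LevelOn.comp_le (hH : Antitone H) (hΨ : LevelOn Ψ a) {x z : ℝ} (hx : a < x)
    (hxz : x ≤ z) : H (Ψ z) ≤ H (z - (x - Ψ x)) := by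
  have := hΨ.antitoneOn_sub hx (hx.trans_le hxz) hxz
  exact hH (by simp only at this; linarith)

lemma LevelOn.integrableOn_comp (hH : AdmissibleIntensity H) (hΨ : LevelOn Ψ a) {x : ℝ}
    (hx : a < x) : IntegrableOn (fun y => H (Ψ y)) (Ioi x) := by
  refine (integrableOn_Ioi_comp_sub (hH.integrableOn_Ioi (x - (x - Ψ x)))).mono'
    ((hH.continuous.comp_continuousOn (hΨ.continuousOn.mono (Ioi_subset_Ioi hx.le)))
      |>.aestronglyMeasurable measurableSet_Ioi) ?_
  refine ae_restrict_of_forall_mem measurableSet_Ioi fun y hy => ?_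
  rw [Real.norm_of_nonneg (hH.nonneg _)]
  exact hΨ.comp_le hH.antitone hx (le_of_lt hy)

lemma LevelOn.setIntegral_comp_le (hH : AdmissibleIntensity H) (hΨ : LevelOn Ψ a) {x y : ℝ}
    (hx : a < x) (hxy : x ≤ y) :
    ∫ z in Ioi y, H (Ψ z) ≤ ∫ z in Ioi (y - (x - Ψ x)), H z := by
  rw [← setIntegral_Ioi_comp_sub]
  refine setIntegral_mono_on (hΨ.integrableOn_comp hH (hx.trans_le hxy))
    (integrableOn_Ioi_comp_sub (hH.integrableOn_Ioi _)) measurableSet_Ioi fun z hz => ?_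
  exact hΨ.comp_le hH.antitone hx (hxy.trans hz.le)

end Level

section SubTail

variable {f Φ : ℝ → ℝ} {b : ℝ}

lemma levelOn_of_eq_sub_setIntegral (hf0 : ∀ y, b < y → 0 ≤ f y)
    (hfi : ∀ x, b < x → IntegrableOn f (Ioi x)) (hfc : ContinuousOn f (Ioi b))
    (hΦ : ∀ x, b < x → Φ x = x - ∫ y in Ioi x, f y) : LevelOn Φ b := by
  have htail : AntitoneOn (fun x => ∫ y in Ioi x, f y) (Ioi b) := fun x hx y _ hxy =>
    setIntegral_Ioi_le_of_le (hfi x hx) (fun z hz => hf0 z (lt_trans hx hz)) hxy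
  refine ⟨fun x hx y hy hxy => ?_, fun x hx y hy hxy => ?_, fun x hx => ?_⟩
  · rw [hΦ x hx, hΦ y hy]
    linarith [htail hx hy hxy.le]
  · simpa only [hΦ x hx, hΦ y hy, sub_sub_cancel] using htail hx hy hxy
  · refine ContinuousAt.continuousWithinAt ?_
    refine ((continuous_id.continuousAt).sub
      (hasDerivAt_setIntegral_Ioi hfi hfc hx).continuousAt).congr ?_
    filter_upwards [Ioi_mem_nhds hx] with y hy
    exact (hΦ y hy).symm

lemma hasDerivAt_of_eq_sub_setIntegral (hfi : ∀ x, b < x → IntegrableOn f (Ioi x))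
    (hfc : ContinuousOn f (Ioi b)) (hΦ : ∀ x, b < x → Φ x = x - ∫ y in Ioi x, f y) {x : ℝ}
    (hx : b < x) : HasDerivAt Φ (1 + f x) x := by
  rw [← sub_neg_eq_add]
  refine ((hasDerivAt_id x).sub (hasDerivAt_setIntegral_Ioi hfi hfc hx)).congr_of_eventuallyEq ?_
  filter_upwards [Ioi_mem_nhds hx] with y hy
  exact hΦ y hy

lemma tendsto_sub_of_eq_sub_setIntegral (hΦ : ∀ x, b < x → Φ x = x - ∫ y in Ioi x, f y) :
    Tendsto (fun y => y - Φ y) atTop (𝓝 0) := by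
  refine (tendsto_integral_Ioi_zero (μ := volume) (f := f) tendsto_id).congr' ?_
  filter_upwards [eventually_gt_atTop b] with y hy
  rw [hΦ y hy, sub_sub_cancel, id]

lemma le_self_of_eq_sub_setIntegral (hf0 : ∀ y, b < y → 0 ≤ f y)
    (hΦ : ∀ x, b < x → Φ x = x - ∫ y in Ioi x, f y) {x : ℝ} (hx : b < x) : Φ x ≤ x := by
  rw [hΦ x hx, sub_le_self_iff]
  exact setIntegral_nonneg measurableSet_Ioi fun y hy => hf0 y (hx.trans hy)

end SubTail

/-- One step `Φ^{j-1} ↦ Φʲ` of the recursion, with `Ψ = Φ^{j-1}`, `S = Rʲ`, `Φ = Φʲ`, `b = rⱼ`;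
`Ψ` is only controlled on `(a, ∞)`, where `a = r_{j-1}` if `j ≥ 2`. -/
structure IsRecursionStep (H Ψ S Φ : ℝ → ℝ) (a b : ℝ) : Prop where
  lt : a < b
  prev : LevelOn Ψ a
  eq_one_sub : ∀ x, a < x → S x = 1 - ∫ y in Ioi x, H (Ψ y)
  eq_zero : S b = 0
  eq_sub : ∀ x, b < x → Φ x = x - ∫ y in Ioi x, (1 / S y - 1)

namespace IsRecursionStep

variable {H Ψ S Φ : ℝ → ℝ} {a b : ℝ}

lemma continuousOn (hH : AdmissibleIntensity H) (h : IsRecursionStep H Ψ S Φ a b) :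
    ContinuousOn S (Ioi a) := fun x hx => by
  have hD := hasDerivAt_setIntegral_Ioi (fun x hx => h.prev.integrableOn_comp hH hx)
    (hH.continuous.comp_continuousOn h.prev.continuousOn) hx
  refine ((continuousAt_const (y := (1 : ℝ)).sub hD.continuousAt).congr ?_).continuousWithinAt
  filter_upwards [Ioi_mem_nhds hx] with y hy
  exact (h.eq_one_sub y hy).symm

lemma le_one (hH : AdmissibleIntensity H) (h : IsRecursionStep H Ψ S Φ a b) {x : ℝ}
    (hx : a < x) : S x ≤ 1 := by
  rw [h.eq_one_sub x hx, sub_le_self_iff]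
  exact setIntegral_nonneg measurableSet_Ioi fun y _ => hH.nonneg _

lemma pos (hH : AdmissibleIntensity H) (h : IsRecursionStep H Ψ S Φ a b) {x : ℝ}
    (hx : b < x) : 0 < S x := by
  have hb : ∫ y in Ioi b, H (Ψ y) = 1 := by linarith [h.eq_one_sub b h.lt, h.eq_zero]
  have hlt := setIntegral_Ioi_lt_of_antitoneOn
    (fun y hy z hz hyz => hH.antitone (h.prev.strictMonoOn.monotoneOn
      (h.lt.trans hy) (h.lt.trans hz) hyz))
    (fun y _ => hH.nonneg _) (h.prev.integrableOn_comp hH h.lt) (hb ▸ one_pos) hx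
  rw [h.eq_one_sub x (h.lt.trans hx)]
  linarith

lemma inv_sub_one_nonneg (hH : AdmissibleIntensity H) (h : IsRecursionStep H Ψ S Φ a b) {x : ℝ}
    (hx : b < x) : 0 ≤ 1 / S x - 1 := by
  rw [sub_nonneg, le_div_iff₀ (h.pos hH hx)]
  linarith [h.le_one hH (h.lt.trans hx)]

lemma continuousOn_inv_sub_one (hH : AdmissibleIntensity H) (h : IsRecursionStep H Ψ S Φ a b) :
    ContinuousOn (fun y => 1 / S y - 1) (Ioi b) :=
  (continuousOn_const.div ((h.continuousOn hH).mono (Ioi_subset_Ioi h.lt.le))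
    fun _ hy => (h.pos hH hy).ne').sub continuousOn_const

/-- The tail of `1 / S - 1 = D / (1 - D)`, `D` the tail integral of `H ∘ Ψ`, is dominated by
`2 D`, and `D` by a shifted tail integral of `H`. -/
lemma integrableOn_inv_sub_one (hH : AdmissibleIntensity H) (h : IsRecursionStep H Ψ S Φ a b)
    {x : ℝ} (hx : b < x) : IntegrableOn (fun y => 1 / S y - 1) (Ioi x) := by
  set C := b - Ψ b
  have hdom : ∀ z, IntegrableOn (fun y => 2 * ∫ w in Ioi (y - C), H w) (Ioi z) := fun z =>
    (integrableOn_Ioi_comp_sub (hH.integrableOn_Ioi_tail (z - C))).const_mul 2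
  have hsmall : ∀ᶠ y in atTop, ∫ z in Ioi y, H (Ψ z) ≤ 1 / 2 :=
    (tendsto_integral_Ioi_zero tendsto_id).eventually (eventually_le_nhds (by norm_num))
  refine integrableOn_Ioi_of_continuousOn_of_eventually_le
    ((h.continuousOn_inv_sub_one hH).mono (Ici_subset_Ioi.2 hx)) hdom ?_
  filter_upwards [hsmall, eventually_gt_atTop b] with y hy hby
  have hS := h.eq_one_sub y (h.lt.trans hby)
  have hD0 : 0 ≤ ∫ z in Ioi y, H (Ψ z) :=
    setIntegral_nonneg measurableSet_Ioi fun _ _ => hH.nonneg _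
  have hDle := h.prev.setIntegral_comp_le hH h.lt hby.le
  have hSpos := h.pos hH hby
  rw [Real.norm_of_nonneg (h.inv_sub_one_nonneg hH hby), div_sub_one hSpos.ne',
    div_le_iff₀ hSpos]
  nlinarith

lemma levelOn (hH : AdmissibleIntensity H) (h : IsRecursionStep H Ψ S Φ a b) : LevelOn Φ b :=
  levelOn_of_eq_sub_setIntegral (fun _ => h.inv_sub_one_nonneg hH)
    (fun _ => h.integrableOn_inv_sub_one hH) (h.continuousOn_inv_sub_one hH) h.eq_sub

lemma hasDerivAt (hH : AdmissibleIntensity H) (h : IsRecursionStep H Ψ S Φ a b) {x : ℝ}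
    (hx : b < x) : HasDerivAt Φ (1 / S x) x := by
  simpa using hasDerivAt_of_eq_sub_setIntegral (fun _ => h.integrableOn_inv_sub_one hH)
    (h.continuousOn_inv_sub_one hH) h.eq_sub hx

lemma tendsto_sub (h : IsRecursionStep H Ψ S Φ a b) :
    Tendsto (fun y => y - Φ y) atTop (𝓝 0) :=
  tendsto_sub_of_eq_sub_setIntegral h.eq_sub

lemma le_self (hH : AdmissibleIntensity H) (h : IsRecursionStep H Ψ S Φ a b) {x : ℝ}
    (hx : b < x) : Φ x ≤ x :=
  le_self_of_eq_sub_setIntegral (fun _ => h.inv_sub_one_nonneg hH) h.eq_sub hx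

end IsRecursionStep

section RightInverse

variable {F g : ℝ → ℝ} {b : ℝ}

lemma apply_apply_of_rightInverse (hF : StrictMonoOn F (Ioi b)) (hg : ∀ z, b < g z)
    (hFg : Function.RightInverse g F) {w : ℝ} (hw : b < w) : g (F w) = w :=
  hF.injOn (hg _) hw (hFg (F w))

lemma monotone_of_rightInverse (hF : StrictMonoOn F (Ioi b)) (hg : ∀ z, b < g z)
    (hFg : Function.RightInverse g F) : Monotone g := fun z w hzw =>
  (hF.le_iff_le (hg z) (hg w)).1 (by rwa [hFg, hFg])

lemma range_eq_Ioi_of_rightInverse (hF : StrictMonoOn F (Ioi b)) (hg : ∀ z, b < g z)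
    (hFg : Function.RightInverse g F) : range g = Ioi b :=
  (range_subset_iff.2 hg).antisymm fun _ hw => ⟨_, apply_apply_of_rightInverse hF hg hFg hw⟩

lemma continuous_of_rightInverse (hF : StrictMonoOn F (Ioi b)) (hg : ∀ z, b < g z)
    (hFg : Function.RightInverse g F) : Continuous g :=
  continuous_iff_continuousAt.2 fun z => continuousAt_of_monotoneOn_of_image_mem_nhds
    ((monotone_of_rightInverse hF hg hFg).monotoneOn univ) univ_mem
    (by rw [image_univ, range_eq_Ioi_of_rightInverse hF hg hFg]; exact Ioi_mem_nhds (hg z))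

lemma hasDerivAt_of_rightInverse {R : ℝ → ℝ} (hF : StrictMonoOn F (Ioi b))
    (hg : ∀ z, b < g z) (hFg : Function.RightInverse g F)
    (hR : ∀ x, b < x → 0 < R x) (hFR : ∀ x, b < x → HasDerivAt F (1 / R x) x) (z : ℝ) :
    HasDerivAt g (R (g z)) z := by
  simpa using (hFR (g z) (hg z)).of_local_left_inverse
    (continuous_of_rightInverse hF hg hFg).continuousAt
    (one_div_ne_zero (hR _ (hg z)).ne') (Eventually.of_forall hFg)

lemma tendsto_atBot_of_rightInverse (hF : StrictMonoOn F (Ioi b)) (hg : ∀ z, b < g z)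
    (hFg : Function.RightInverse g F) : Tendsto g atBot (𝓝 b) := by
  have hrange := range_eq_Ioi_of_rightInverse hF hg hFg
  have := tendsto_atBot_ciInf (monotone_of_rightInverse hF hg hFg)
    (by rw [hrange]; exact bddBelow_Ioi)
  rwa [iInf, hrange, csInf_Ioi] at this

lemma tendsto_sub_atTop_of_rightInverse (hg : ∀ z, b < g z) (hFg : Function.RightInverse g F)
    (hle : ∀ y, b < y → F y ≤ y) (hlim : Tendsto (fun y => y - F y) atTop (𝓝 0)) :
    Tendsto (fun z => g z - z) atTop (𝓝 0) := by
  have hg_atTop : Tendsto g atTop atTop :=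
    tendsto_atTop_mono (fun z => (hFg z).symm.trans_le (hle _ (hg z))) tendsto_id
  refine (hlim.comp hg_atTop).congr fun z => ?_
  simp only [Function.comp_apply, hFg z]

end RightInverse

structure CaseThreeRecursion (H : ℝ → ℝ) (R : ℕ → ℝ → ℝ) (r : ℕ → ℝ) (Φ φ : ℕ → ℝ → ℝ) :
    Prop where
  intensity : AdmissibleIntensity H
  zero_apply : ∀ x, Φ 0 x = x
  rate_eq : ∀ j, 1 ≤ j → ∀ x, (2 ≤ j → r (j - 1) < x) →
    R j x = 1 - ∫ y in Ioi x, H (Φ (j - 1) y)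
  lt_and_rate_eq_zero : ∀ j, 1 ≤ j → (2 ≤ j → r (j - 1) < r j) ∧ R j (r j) = 0
  apply_eq : ∀ j, 1 ≤ j → ∀ x, r j < x → Φ j x = x - ∫ y in Ioi x, (1 / R j y - 1)
  inverse : ∀ j, 1 ≤ j → ∀ z, r j < φ j z ∧ Φ j (φ j z) = z

namespace CaseThreeRecursion

variable {H : ℝ → ℝ} {R : ℕ → ℝ → ℝ} {r : ℕ → ℝ} {Φ φ : ℕ → ℝ → ℝ}

lemma exists_isRecursionStep (h : CaseThreeRecursion H R r Φ φ) :
    ∀ k, 1 ≤ k → ∃ a, IsRecursionStep H (Φ (k - 1)) (R k) (Φ k) a (r k)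
  -- `Φ 0 = id` is a level on every half-line, so any `a < r 1` will do.
  | 1, _ => ⟨r 1 - 1, sub_one_lt _, (levelOn_id _).congr fun x _ => h.zero_apply x,
      fun x _ => h.rate_eq 1 le_rfl x (by omega), (h.lt_and_rate_eq_zero 1 le_rfl).2,
      h.apply_eq 1 le_rfl⟩
  | k + 2, _ => by
    obtain ⟨_, hstep⟩ := h.exists_isRecursionStep (k + 1) (by omega)
    exact ⟨r (k + 1), (h.lt_and_rate_eq_zero (k + 2) (by omega)).1 (by omega),
      hstep.levelOn h.intensity, fun x hx => h.rate_eq (k + 2) (by omega) x fun _ => hx,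
      (h.lt_and_rate_eq_zero (k + 2) (by omega)).2, h.apply_eq (k + 2) (by omega)⟩

lemma levelOn (h : CaseThreeRecursion H R r Φ φ) {k : ℕ} (hk : 1 ≤ k) : LevelOn (Φ k) (r k) :=
  (h.exists_isRecursionStep k hk).choose_spec.levelOn h.intensity

lemma setIntegral_comp_eq_one_sub (h : CaseThreeRecursion H R r Φ φ) {k : ℕ} (hk : 1 ≤ k)
    {p : ℝ} (hp : r k < p) : ∫ z in Ioi p, H (Φ (k - 1) z) = 1 - R k p := by
  linarith [h.rate_eq k hk p fun h2 => ((h.lt_and_rate_eq_zero k hk).1 h2).trans hp]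

lemma inverse_apply_apply (h : CaseThreeRecursion H R r Φ φ) {k : ℕ} (hk : 1 ≤ k) {w : ℝ}
    (hw : r k < w) : φ k (Φ k w) = w :=
  apply_apply_of_rightInverse (h.levelOn hk).strictMonoOn (fun z => (h.inverse k hk z).1)
    (fun z => (h.inverse k hk z).2) hw

lemma hasDerivAt_inverse (h : CaseThreeRecursion H R r Φ φ) {k : ℕ} (hk : 1 ≤ k) (z : ℝ) :
    HasDerivAt (φ k) (R k (φ k z)) z := by
  obtain ⟨_, hstep⟩ := h.exists_isRecursionStep k hk
  exact hasDerivAt_of_rightInverse (hstep.levelOn h.intensity).strictMonoOn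
    (fun z => (h.inverse k hk z).1) (fun z => (h.inverse k hk z).2)
    (fun _ => hstep.pos h.intensity) (fun _ => hstep.hasDerivAt h.intensity) z

lemma tendsto_inverse_atBot (h : CaseThreeRecursion H R r Φ φ) {k : ℕ} (hk : 1 ≤ k) :
    Tendsto (φ k) atBot (𝓝 (r k)) :=
  tendsto_atBot_of_rightInverse (h.levelOn hk).strictMonoOn (fun z => (h.inverse k hk z).1)
    (fun z => (h.inverse k hk z).2)

lemma tendsto_inverse_sub_atTop (h : CaseThreeRecursion H R r Φ φ) {k : ℕ} (hk : 1 ≤ k) :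
    Tendsto (fun z => φ k z - z) atTop (𝓝 0) := by
  obtain ⟨_, hstep⟩ := h.exists_isRecursionStep k hk
  exact tendsto_sub_atTop_of_rightInverse (fun z => (h.inverse k hk z).1)
    (fun z => (h.inverse k hk z).2) (fun _ => hstep.le_self h.intensity) hstep.tendsto_sub

end CaseThreeRecursion

lemma ContDiffOn.hasDerivAt_deriv_nonpos {v : ℝ → ℝ} {s : Set ℝ} {t : ℝ}
    (hv : ContDiffOn ℝ 1 v s) (hvs : AntitoneOn v s) (hs : s ∈ 𝓝 t) :
    HasDerivAt v (deriv v t) t ∧ deriv v t ≤ 0 := by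
  have hvt := ((hv.contDiffAt hs).differentiableAt one_ne_zero).hasDerivAt
  refine ⟨hvt, hvt.hasDerivWithinAt.nonpos_of_antitoneOn ?_ hvs⟩
  exact (isOpen_interior.preperfect t (mem_interior_iff_mem_nhds.2 hs)).mono
    (principal_mono.2 interior_subset)

section Translate

variable {g : ℝ → ℝ}

lemma hasDerivAt_comp_sub_add {v : ℝ → ℝ} {g' v' x t : ℝ} (hg : HasDerivAt g g' (x - v t))
    (hv : HasDerivAt v v' t) (hv' : v' ≤ 0) :
    HasDerivAt (fun s => g (x - v s) + v s) (-((1 - g') * |v'|)) t := by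
  refine ((hg.comp t (hv.const_sub x)).add hv).congr_deriv ?_
  rw [abs_of_nonpos hv']
  ring

lemma tendsto_comp_sub_add_of_tendsto_atBot {α : Type*} {l : Filter α} {v : α → ℝ}
    (hg : Tendsto (fun z => g z - z) atTop (𝓝 0)) (hv : Tendsto v l atBot) (x : ℝ) :
    Tendsto (fun t => g (x - v t) + v t) l (𝓝 x) := by
  have hw : Tendsto (fun t => x - v t) l atTop := by
    simpa [sub_eq_add_neg] using
      tendsto_atTop_add_const_left _ x (tendsto_neg_atBot_atTop.comp hv)
  have hlim := (hg.comp hw).const_add x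
  rw [add_zero] at hlim
  refine hlim.congr fun t => ?_
  rw [Function.comp_apply]
  ring

lemma tendsto_comp_sub_add_atBot {b : ℝ} (hg : Tendsto g atBot (𝓝 b)) (c : ℝ) :
    Tendsto (fun x => g (x - c) + c) atBot (𝓝 (b + c)) := by
  simpa [sub_eq_add_neg] using
    (hg.comp (tendsto_atBot_add_const_right _ (-c) tendsto_id)).add_const c

lemma setIntegral_Ioi_comp_of_eq_shift {G ξ H Ψ : ℝ → ℝ} {b c k p : ℝ}
    (hG : ∀ y, G y = H (y - c) * k) (hξ : ∀ w, b < w → ξ (w + c) = Ψ w + c) (hp : b < p) :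
    ∫ y in Ioi (p + c), G (ξ y) = (∫ z in Ioi p, H (Ψ z)) * k := by
  have hshift := setIntegral_Ioi_comp_sub (fun z => H (Ψ z) * k) (p + c) c
  rw [add_sub_cancel_right] at hshift
  rw [← integral_mul_const, ← hshift]
  refine setIntegral_congr_fun measurableSet_Ioi fun y hy => ?_
  rw [← sub_add_cancel y c, hξ _ (by linarith [mem_Ioi.1 hy]), hG, add_sub_cancel_right,
    sub_add_cancel]

end Translate

theorem stmt11_general (H : ℝ → ℝ)
    (hmono : Antitone H) (hcont : Continuous H) (hnonneg : ∀ x, 0 ≤ H x)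
    (hint : ∀ x : ℝ, IntegrableOn H (Ioi x))
    (hiter : ∀ z : ℝ, IntegrableOn (fun y => ∫ x in Ioi y, H x) (Ioi z))
    (R : ℕ → ℝ → ℝ) (r : ℕ → ℝ) (Φ : ℕ → ℝ → ℝ) (φ : ℕ → ℝ → ℝ)
    (hΦ0 : ∀ x, Φ 0 x = x)
    (hR : ∀ j, 1 ≤ j → ∀ x, (2 ≤ j → r (j - 1) < x) →
      R j x = 1 - ∫ y in Ioi x, H (Φ (j - 1) y))
    (hrzero : ∀ j, 1 ≤ j → (2 ≤ j → r (j - 1) < r j) ∧ R j (r j) = 0)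
    (hΦdef : ∀ j, 1 ≤ j → ∀ x, r j < x →
      Φ j x = x - ∫ y in Ioi x, (1 / R j y - 1))
    (hφ : ∀ j, 1 ≤ j → ∀ z : ℝ, r j < φ j z ∧ Φ j (φ j z) = z)
    (m : ℕ) (hm : 1 ≤ m)
    (v : ℝ → ℝ) (hv : ContDiffOn ℝ 1 v (Ico 0 1)) (hvmono : AntitoneOn v (Ico 0 1))
    (hv1 : Tendsto v (nhdsWithin 1 (Iio 1)) atBot)
    (G : ℝ → ℝ → ℝ)
    (hG : ∀ t ∈ Ico (0:ℝ) 1, ∀ y, G t y = H (y - v t) * |deriv v t|)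
    (u : ℕ → ℝ → ℝ → ℝ)
    (hu0 : ∀ t x, u 0 t x = x)
    (hu : ∀ j, 1 ≤ j → j ≤ m → ∀ t ∈ Ico (0:ℝ) 1, ∀ x, u j t x = φ j (x - v t) + v t)
    (ξ : ℝ → ℝ → ℝ)
    (hξ : ∀ t ∈ Ico (0:ℝ) 1, ∀ z, ξ t (u (m - 1) t z) = z) :
    (∀ x : ℝ, ∀ t ∈ Ioo (0:ℝ) 1,
      HasDerivAt (fun s => u m s x)
        (-(∫ y in Ioi (u m t x), G t (ξ t y))) t) ∧
    (∀ x : ℝ, Tendsto (fun t => u m t x) (nhdsWithin 1 (Iio 1)) (nhds x)) ∧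
    (∀ t ∈ Ico (0:ℝ) 1,
      Tendsto (fun x => u m t x) atBot (nhds (r m + v t))) := by
  have hrec : CaseThreeRecursion H R r Φ φ :=
    ⟨⟨hmono, hcont, hnonneg, hint, hiter⟩, hΦ0, hR, hrzero, hΦdef, hφ⟩
  have hum : ∀ t ∈ Ico (0:ℝ) 1, ∀ x, u m t x = φ m (x - v t) + v t := hu m hm le_rfl
  have hξm : ∀ t ∈ Ico (0:ℝ) 1, ∀ w, r m < w → ξ t (w + v t) = Φ (m - 1) w + v t := by
    intro t ht w hw
    rw [← hξ t ht (Φ (m - 1) w + v t)]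
    congr 1
    rcases (by omega : m = 1 ∨ 2 ≤ m) with rfl | hm2
    · simp [hu0, hΦ0]
    · rw [hu (m - 1) (by omega) (by omega) t ht, add_sub_cancel_right,
        hrec.inverse_apply_apply (by omega) (((hrzero m hm).1 hm2).trans hw)]
  refine ⟨fun x t ht => ?_, fun x => ?_, fun t ht => ?_⟩
  · have hIco : Ico (0:ℝ) 1 ∈ 𝓝 t :=
      mem_of_superset (isOpen_Ioo.mem_nhds ht) Ioo_subset_Ico_self
    have htI : t ∈ Ico (0:ℝ) 1 := Ioo_subset_Ico_self ht
    obtain ⟨hvt, hv'⟩ := hv.hasDerivAt_deriv_nonpos hvmono hIco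
    have hp : r m < φ m (x - v t) := (hφ m hm (x - v t)).1
    rw [hum t htI, setIntegral_Ioi_comp_of_eq_shift (hG t htI) (hξm t htI) hp,
      hrec.setIntegral_comp_eq_one_sub hm hp]
    refine (hasDerivAt_comp_sub_add (hrec.hasDerivAt_inverse hm _) hvt hv').congr_of_eventuallyEq ?_
    filter_upwards [hIco] with s hs using hum s hs x
  · refine (tendsto_comp_sub_add_of_tendsto_atBot (hrec.tendsto_inverse_sub_atTop hm) hv1 x
      |>.congr' ?_)
    filter_upwards [Ico_mem_nhdsLT (zero_lt_one' ℝ)] with t ht using (hum t ht x).symm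
  · simpa only [hum t ht, add_comm (v t)] using
      tendsto_comp_sub_add_atBot (hrec.tendsto_inverse_atBot hm) (v t)

/-- Case 3 explicit optimal `m`-stopping curves (Section 4): with additive intensity
`G(t,y) = H(y - v(t))·|v'(t)|`, `v` nonincreasing `C¹`, finite on `[0,1)`, `v(1) = -∞`,
the functions `uᵐ(t,x) = φᵐ(x - v(t)) + v(t)` (with `φᵐ = (Φᵐ)⁻¹`) solve
`∂_t uᵐ(t,x) = -∫_{uᵐ(t,x)}^∞ G(t, ξ^{m-1}(t,y)) dy` with `uᵐ(1,x) = x`, and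
`uᵐ(t,-∞) = r_m + v(t)`. -/
theorem stmt11 (H : ℝ → ℝ)
    (hmono : Antitone H) (hcont : Continuous H) (hnonneg : ∀ x, 0 ≤ H x)
    (hpos : 0 < ∫⁻ x, ENNReal.ofReal (H x))
    (hint : ∀ x : ℝ, IntegrableOn H (Ioi x))
    (hiter : ∀ z : ℝ, IntegrableOn (fun y => ∫ x in Ioi y, H x) (Ioi z))
    (R : ℕ → ℝ → ℝ) (r : ℕ → ℝ) (Φ : ℕ → ℝ → ℝ) (φ : ℕ → ℝ → ℝ)
    (hΦ0 : ∀ x, Φ 0 x = x)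
    (hR : ∀ j, 1 ≤ j → ∀ x, (2 ≤ j → r (j - 1) < x) →
      R j x = 1 - ∫ y in Ioi x, H (Φ (j - 1) y))
    (hrzero : ∀ j, 1 ≤ j → (2 ≤ j → r (j - 1) < r j) ∧ R j (r j) = 0)
    (hΦdef : ∀ j, 1 ≤ j → ∀ x, r j < x →
      Φ j x = x - ∫ y in Ioi x, (1 / R j y - 1))
    (hφ : ∀ j, 1 ≤ j → ∀ z : ℝ, r j < φ j z ∧ Φ j (φ j z) = z)
    (m : ℕ) (hm : 1 ≤ m)
    (v : ℝ → ℝ) (hv : ContDiffOn ℝ 1 v (Ico 0 1)) (hvmono : AntitoneOn v (Ico 0 1))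
    (hv1 : Tendsto v (nhdsWithin 1 (Iio 1)) atBot)
    (G : ℝ → ℝ → ℝ)
    (hG : ∀ t ∈ Ico (0:ℝ) 1, ∀ y, G t y = H (y - v t) * |deriv v t|)
    (u : ℕ → ℝ → ℝ → ℝ)
    (hu0 : ∀ t x, u 0 t x = x)
    (hu : ∀ j, 1 ≤ j → j ≤ m → ∀ t ∈ Ico (0:ℝ) 1, ∀ x, u j t x = φ j (x - v t) + v t)
    (ξ : ℝ → ℝ → ℝ)
    (hξ : ∀ t ∈ Ico (0:ℝ) 1, ∀ z, ξ t (u (m - 1) t z) = z) :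
    (∀ x : ℝ, ∀ t ∈ Ioo (0:ℝ) 1,
      HasDerivAt (fun s => u m s x)
        (-(∫ y in Ioi (u m t x), G t (ξ t y))) t) ∧
    (∀ x : ℝ, Tendsto (fun t => u m t x) (nhdsWithin 1 (Iio 1)) (nhds x)) ∧
    (∀ t ∈ Ico (0:ℝ) 1,
      Tendsto (fun x => u m t x) atBot (nhds (r m + v t))) :=
  stmt11_general H hmono hcont hnonneg hint hiter R r Φ φ hΦ0 hR hrzero hΦdef hφ m hm v hv hvmono
    hv1 G hG u hu0 hu ξ hξ
end

section
/- Let $(Y_n)$, $Y$ be random variables and $(\mathcal G_n)$ a sequence of $\sigma$-algebras with $\mathcal G \subset \mathcal G_n$ for all $n$. Suppose that for every bounded continuous $f : \overline{\mathbb R} \to [0,1]$ one has $E[f(Y_n) \mid \mathcal G_n] \to E[f(Y)]$ in probability, and also $Y_n \to Y$ almost surely. Then $E[f(Y) \mid \mathcal G] = E[f(Y)]$ almost surely for every bounded continuous $f$; consequently $Y$ is independent of $\mathcal G$. -/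
/-!
For `A ∈ 𝒢 ⊆ 𝒢ₙ` the tower property gives `∫_A f(Yₙ) = ∫_A E[f(Yₙ) | 𝒢ₙ]`. The left side tends
to `∫_A f(Y)` by dominated convergence since `Yₙ → Y` a.s.; the conditional expectations are
bounded by `1` and converge in measure to the constant `E[f(Y)]`, so the right side tends to
`E[f(Y)] μ(A)`. Hence `∫_A f(Y) = E[f(Y)] μ(A)` for every `A ∈ 𝒢`, which identifies
`E[f(Y) | 𝒢]` with the constant `E[f(Y)]`. Read as an identity between the finite measures
`B ↦ μ(Y ∈ B, A)` and `B ↦ μ(A) μ(Y ∈ B)` tested against continuous `[0,1]`-valued functions,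
it forces the two measures to agree, which is the independence of `Y` and `𝒢`.
-/

open MeasureTheory Filter Set Topology BoundedContinuousFunction

section

variable {Ω : Type*} {m0 : MeasurableSpace Ω} {μ : Measure Ω}

theorem tendsto_setIntegral_of_tendstoInMeasure_of_abs_le [IsFiniteMeasure μ]
    {Z : ℕ → Ω → ℝ} {g : Ω → ℝ} {C : ℝ} (hZm : ∀ n, AEStronglyMeasurable (Z n) μ)
    (hZC : ∀ n, ∀ᵐ ω ∂μ, |Z n ω| ≤ C) (hZ : TendstoInMeasure μ Z atTop g) (A : Set Ω) :
    Tendsto (fun n => ∫ ω in A, Z n ω ∂μ) atTop (𝓝 (∫ ω in A, g ω ∂μ)) := by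
  refine tendsto_of_subseq_tendsto fun ns hns => ?_
  obtain ⟨ms, -, hms⟩ := (hZ.comp hns).exists_seq_tendsto_ae
  exact ⟨ms, tendsto_integral_of_dominated_convergence (fun _ => C)
    (fun _ => (hZm _).restrict) (integrable_const C)
    (fun _ => ae_restrict_of_ae (hZC _)) (ae_restrict_of_ae hms)⟩

theorem setIntegral_comp_eq_mul_of_condExp_tendstoInMeasure [IsFiniteMeasure μ]
    {Y : ℕ → Ω → ℝ} {Ylim : Ω → ℝ} {Gn : ℕ → MeasurableSpace Ω}
    {f : ℝ → ℝ} {C c : ℝ} (hf : Continuous f) (hfC : ∀ x, |f x| ≤ C)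
    (hYm : ∀ n, Measurable (Y n)) (hGnm : ∀ n, Gn n ≤ m0)
    (hconv : TendstoInMeasure μ (fun n => μ[fun ω => f (Y n ω) | Gn n]) atTop (fun _ => c))
    (hae : ∀ᵐ ω ∂μ, Tendsto (fun n => Y n ω) atTop (𝓝 (Ylim ω)))
    {A : Set Ω} (hA : ∀ n, MeasurableSet[Gn n] A) :
    ∫ ω in A, f (Ylim ω) ∂μ = c * μ.real A := by
  have hfYm : ∀ n, AEStronglyMeasurable (fun ω => f (Y n ω)) μ := fun n =>
    (hf.measurable.comp (hYm n)).aestronglyMeasurable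
  have hlim : Tendsto (fun n => ∫ ω in A, f (Y n ω) ∂μ) atTop (𝓝 (∫ ω in A, f (Ylim ω) ∂μ)) :=
    tendsto_integral_of_dominated_convergence (fun _ => C) (fun n => (hfYm n).restrict)
      (integrable_const C) (fun _ => ae_restrict_of_ae (ae_of_all _ fun _ => hfC _))
      (ae_restrict_of_ae (hae.mono fun ω hω => (hf.tendsto _).comp hω))
  have hcond : Tendsto (fun n => ∫ ω in A, f (Y n ω) ∂μ) atTop (𝓝 (c * μ.real A)) := by
    have h := tendsto_setIntegral_of_tendstoInMeasure_of_abs_le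
      (fun n => (stronglyMeasurable_condExp.mono (hGnm n)).aestronglyMeasurable)
      (fun n => ae_bdd_abs_condExp_of_ae_bdd_abs (ae_of_all _ fun ω => hfC (Y n ω))) hconv A
    rw [setIntegral_const, smul_eq_mul, mul_comm] at h
    refine h.congr fun n => setIntegral_condExp (hGnm n) ?_ (hA n)
    exact Integrable.of_bound (hfYm n) C (ae_of_all _ fun _ => hfC _)
  exact tendsto_nhds_unique hlim hcond

theorem condExp_ae_eq_const_of_forall_setIntegral_eq [IsFiniteMeasure μ]
    {G : MeasurableSpace Ω} (hGm : G ≤ m0) {X : Ω → ℝ} (hX : Integrable X μ) {c : ℝ}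
    (h : ∀ A, MeasurableSet[G] A → ∫ ω in A, X ω ∂μ = c * μ.real A) :
    μ[X | G] =ᵐ[μ] fun _ => c := by
  refine (ae_eq_condExp_of_forall_setIntegral_eq hGm hX
    (fun A _ _ => integrableOn_const (measure_ne_top _ _)) (fun A hA _ => ?_)
    stronglyMeasurable_const.aestronglyMeasurable).symm
  rw [h A hA, setIntegral_const, smul_eq_mul, mul_comm]

theorem ext_of_forall_integral_eq_of_mem_Icc {E : Type*} [MeasurableSpace E]
    [TopologicalSpace E] [HasOuterApproxClosed E] [BorelSpace E] {ν₁ ν₂ : Measure E}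
    [IsFiniteMeasure ν₁] [IsFiniteMeasure ν₂]
    (h : ∀ f : E →ᵇ ℝ, (∀ x, f x ∈ Icc (0 : ℝ) 1) → ∫ x, f x ∂ν₁ = ∫ x, f x ∂ν₂) :
    ν₁ = ν₂ := by
  refine ext_of_forall_integral_eq_of_IsFiniteMeasure fun f => ?_
  set M := ‖f‖
  have hM : 0 < 2 * M + 1 := by positivity
  set g : E →ᵇ ℝ := (2 * M + 1)⁻¹ • (f + const E M)
  have hg_apply : ∀ x, g x = (2 * M + 1)⁻¹ * (f x + M) := fun x => rfl
  have hg : ∀ x, g x ∈ Icc (0 : ℝ) 1 := fun x => by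
    have hfx := abs_le.1 ((Real.norm_eq_abs _).symm ▸ f.norm_coe_le_norm x)
    rw [hg_apply, mem_Icc, inv_mul_le_iff₀ hM]
    exact ⟨mul_nonneg (inv_nonneg.2 hM.le) (by linarith), by linarith⟩
  have hf : ∀ x, f x = (2 * M + 1) * g x - M := fun x => by
    rw [hg_apply]; field_simp; ring
  have huniv : ν₁.real univ = ν₂.real univ := by
    simpa using h 1 fun x => by simp
  simp only [hf]
  rw [integral_sub ((g.integrable ν₁).const_mul _) (integrable_const _),
    integral_sub ((g.integrable ν₂).const_mul _) (integrable_const _),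
    integral_const_mul, integral_const_mul, h g hg, integral_const, integral_const, huniv]

theorem measure_preimage_inter_eq_mul_of_forall_setIntegral_eq [IsFiniteMeasure μ] {X : Ω → ℝ}
    (hX : Measurable X) {A : Set Ω}
    (h : ∀ f : ℝ → ℝ, Continuous f → (∀ x, f x ∈ Icc (0 : ℝ) 1) →
      ∫ ω in A, f (X ω) ∂μ = (∫ ω, f (X ω) ∂μ) * μ.real A)
    {s : Set ℝ} (hs : MeasurableSet s) : μ (X ⁻¹' s ∩ A) = μ (X ⁻¹' s) * μ A := by
  have hmap : (μ.restrict A).map X = μ A • μ.map X := by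
    have := (μ.map X).smul_finite (measure_ne_top μ A)
    refine ext_of_forall_integral_eq_of_mem_Icc fun f hf => ?_
    rw [integral_map hX.aemeasurable f.continuous.aestronglyMeasurable, integral_smul_measure,
      integral_map hX.aemeasurable f.continuous.aestronglyMeasurable,
      h f f.continuous hf, smul_eq_mul, mul_comm]
    rfl
  calc μ (X ⁻¹' s ∩ A) = (μ.restrict A).map X s := by
        rw [Measure.map_apply hX hs, Measure.restrict_apply (hX hs)]
    _ = μ (X ⁻¹' s) * μ A := by
        rw [hmap, Measure.smul_apply, Measure.map_apply hX hs, smul_eq_mul, mul_comm]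

end

/-- Asymptotic independence extraction (proof of Theorem 5.2(a)): if
`E[f(Y_n) | 𝒢_n] → E[f(Y)]` in probability for all continuous `f : ℝ → [0,1]`,
`Y_n → Y` a.s., and `𝒢 ⊆ 𝒢_n` for all `n`, then `E[f(Y) | 𝒢] = E[f(Y)]` a.s. for
every such `f`, and consequently `Y` is independent of `𝒢`. -/
theorem stmt18 {Ω : Type*} {m0 : MeasurableSpace Ω} (μ : Measure Ω) [IsProbabilityMeasure μ]
    (Y : ℕ → Ω → ℝ) (Ylim : Ω → ℝ) (hYm : ∀ n, Measurable (Y n)) (hYlim : Measurable Ylim)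
    (G : MeasurableSpace Ω) (Gn : ℕ → MeasurableSpace Ω)
    (hGG : ∀ n, G ≤ Gn n) (hGnm : ∀ n, Gn n ≤ m0) (hGm : G ≤ m0)
    (hconv : ∀ f : ℝ → ℝ, Continuous f → (∀ x, f x ∈ Icc (0:ℝ) 1) →
      TendstoInMeasure μ (fun n => μ[fun ω => f (Y n ω) | Gn n]) atTop
        (fun _ => ∫ ω, f (Ylim ω) ∂μ))
    (hae : ∀ᵐ ω ∂μ, Tendsto (fun n => Y n ω) atTop (nhds (Ylim ω))) :
    (∀ f : ℝ → ℝ, Continuous f → (∀ x, f x ∈ Icc (0:ℝ) 1) →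
      μ[fun ω => f (Ylim ω) | G] =ᵐ[μ] fun _ => ∫ ω, f (Ylim ω) ∂μ) ∧
    (∀ s : Set ℝ, MeasurableSet s → ∀ A : Set Ω, MeasurableSet[G] A →
      μ (Ylim ⁻¹' s ∩ A) = μ (Ylim ⁻¹' s) * μ A) := by
  have habs : ∀ f : ℝ → ℝ, (∀ x, f x ∈ Icc (0:ℝ) 1) → ∀ x, |f x| ≤ 1 :=
    fun f hf01 x => abs_le.2 ⟨by linarith [(hf01 x).1], (hf01 x).2⟩
  have key : ∀ f : ℝ → ℝ, Continuous f → (∀ x, f x ∈ Icc (0:ℝ) 1) →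
      ∀ A, MeasurableSet[G] A → ∫ ω in A, f (Ylim ω) ∂μ = (∫ ω, f (Ylim ω) ∂μ) * μ.real A :=
    fun f hf hf01 A hA => setIntegral_comp_eq_mul_of_condExp_tendstoInMeasure hf
      (habs f hf01) hYm hGnm (hconv f hf hf01) hae
      (fun n => hGG n A hA)
  refine ⟨fun f hf hf01 => condExp_ae_eq_const_of_forall_setIntegral_eq hGm ?_ (key f hf hf01),
    fun s hs A hA => measure_preimage_inter_eq_mul_of_forall_setIntegral_eq hYlim
      (fun f hf hf01 => key f hf hf01 A hA) hs⟩
  exact Integrable.of_bound (hf.measurable.comp hYlim).aestronglyMeasurable 1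
    (ae_of_all _ fun ω => habs f hf01 (Ylim ω))
end
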